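/- Let n ≥ 2 and let λ_1 ≥ λ_2 ≥ ⋯ ≥ λ_n be real numbers satisfying ∑_{i=1}^n arctan λ_i ≥ (n−2)π/2 and λ_n < 0. Then −1/λ_n ≥ 1/λ_1 + 1/λ_2 + ⋯ + 1/λ_{n−1} ≥ (n−1)/λ_1. -/

import Mathlib

/-!
Put `μ_i = 1/λ_i`. The arctangents of the `λ_i` are `< π/2`, and `arctan λ_n < 0`, so the
hypothesis forces `λ_1, …, λ_{n-1} > 0`. Then `arctan μ_i = π/2 - arctan λ_i` for `i < n` and
`arctan λ_n = arctan (-1/λ_n) - π/2`, which turns the hypothesis into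
`∑_{i<n} arctan μ_i ≤ arctan (-1/λ_n)`. Since `arctan` is subadditive on `[0, ∞)`, this gives
`arctan (∑_{i<n} μ_i) ≤ arctan (-1/λ_n)`, the first inequality. The second one is `μ_1 ≤ μ_i`.
-/

open Real Finset

namespace Real

theorem arctan_add_le_add_arctan {x y : ℝ} (hx : 0 ≤ x) (hy : 0 ≤ y) :
    arctan (x + y) ≤ arctan x + arctan y := by
  rcases lt_or_ge (x * y) 1 with hxy | hxy
  · rw [arctan_add hxy]
    refine arctan_strictMono.monotone ?_
    rw [le_div_iff₀ (by linarith)]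
    nlinarith [mul_nonneg (mul_nonneg (add_nonneg hx hy) hx) hy]
  · -- here `y ≥ 1/x`, so `arctan x + arctan y ≥ π/2`
    have hx' : 0 < x := by nlinarith
    have hinv : x⁻¹ ≤ y := by rw [inv_le_iff_one_le_mul₀ hx']; linarith
    have := arctan_strictMono.monotone hinv
    rw [arctan_inv_of_pos hx'] at this
    linarith [arctan_lt_pi_div_two (x + y)]

theorem arctan_sum_le_sum_arctan {ι : Type*} {s : Finset ι} {f : ι → ℝ}
    (hf : ∀ i ∈ s, 0 ≤ f i) : arctan (∑ i ∈ s, f i) ≤ ∑ i ∈ s, arctan (f i) :=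
  le_sum_of_subadditive_on_pred arctan (0 ≤ ·) arctan_zero.le
    (fun _ _ => arctan_add_le_add_arctan) (fun _ _ => add_nonneg) f hf

end Real

section ArctanSum

variable {ι : Type*} [DecidableEq ι] {s : Finset ι} {f : ι → ℝ}

theorem sum_arctan_le_of_ne {a b : ι} (ha : a ∈ s) (hb : b ∈ s) (hab : a ≠ b) :
    ∑ i ∈ s, arctan (f i) ≤ arctan (f a) + arctan (f b) + ((#s : ℝ) - 2) * (π / 2) := by
  have hb' : b ∈ s.erase a := mem_erase.mpr ⟨hab.symm, hb⟩
  have hcard : (#((s.erase a).erase b) : ℝ) = #s - 2 := by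
    have h₁ : (#(s.erase a) : ℝ) + 1 = #s := mod_cast card_erase_add_one ha
    have h₂ : (#((s.erase a).erase b) : ℝ) + 1 = #(s.erase a) := mod_cast card_erase_add_one hb'
    linarith
  rw [← add_sum_erase _ _ ha, ← add_sum_erase _ _ hb', ← add_assoc, ← hcard, ← nsmul_eq_mul]
  gcongr
  exact sum_le_card_nsmul _ _ _ fun i _ => (arctan_lt_pi_div_two _).le

theorem pos_of_sum_arctan_ge {j : ι} (hj : j ∈ s) (hneg : f j < 0)
    (hsum : ((#s : ℝ) - 2) * (π / 2) ≤ ∑ i ∈ s, arctan (f i)) : ∀ i ∈ s.erase j, 0 < f i := by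
  intro i hi
  obtain ⟨hij, hi⟩ := mem_erase.mp hi
  have hbound := sum_arctan_le_of_ne (f := f) hi hj hij
  have hj' : arctan (f j) < 0 := arctan_lt_zero.mpr hneg
  exact arctan_pos.mp (by linarith)

theorem sum_inv_erase_le_neg_inv {j : ι} (hj : j ∈ s) (hneg : f j < 0)
    (hsum : ((#s : ℝ) - 2) * (π / 2) ≤ ∑ i ∈ s, arctan (f i)) :
    ∑ i ∈ s.erase j, (f i)⁻¹ ≤ -(f j)⁻¹ := by
  have hpos := pos_of_sum_arctan_ge hj hneg hsum
  have hlast : arctan (f j) = arctan (-(f j)⁻¹) - π / 2 := by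
    rw [arctan_neg, arctan_inv_of_neg hneg]; ring
  have hcard : (#(s.erase j) : ℝ) + 1 = #s := mod_cast card_erase_add_one hj
  have hkey : ∑ i ∈ s.erase j, arctan (f i)⁻¹ ≤ arctan (-(f j)⁻¹) := by
    rw [sum_congr rfl fun i hi => arctan_inv_of_pos (hpos i hi), sum_sub_distrib, sum_const,
      nsmul_eq_mul, eq_sub_of_add_eq hcard]
    rw [← add_sum_erase _ _ hj, hlast] at hsum
    linarith
  refine arctan_strictMono.le_iff_le.mp ((arctan_sum_le_sum_arctan ?_).trans hkey)
  exact fun i hi => (inv_pos.mpr (hpos i hi)).le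

end ArctanSum

/-- For ordered reals `λ_1 ≥ ⋯ ≥ λ_n` with `∑ arctan λ_i ≥ (n-2)π/2`, `n ≥ 2`, and
`λ_n < 0`, one has `-1/λ_n ≥ 1/λ_1 + ⋯ + 1/λ_{n-1} ≥ (n-1)/λ_1`.  (Indices are
zero-based: `lam ⟨0⟩ = λ_1`, `lam ⟨n-1⟩ = λ_n`; the middle sum runs over the first
`n-1` entries.) -/
theorem ordered_eigen_reciprocal
    (n : ℕ) (hn : 2 ≤ n) (lam : Fin n → ℝ)
    (hsort : ∀ i j : Fin n, i ≤ j → lam j ≤ lam i)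
    (hsum : ((n : ℝ) - 2) * Real.pi / 2 ≤ ∑ i, Real.arctan (lam i))
    (hneg : lam ⟨n - 1, by omega⟩ < 0) :
    (∑ i ∈ Finset.univ.filter (fun i : Fin n => (i : ℕ) < n - 1), 1 / lam i)
        ≤ -(1 / lam ⟨n - 1, by omega⟩) ∧
      ((n : ℝ) - 1) / lam ⟨0, by omega⟩
        ≤ ∑ i ∈ Finset.univ.filter (fun i : Fin n => (i : ℕ) < n - 1), 1 / lam i := by
  set last : Fin n := ⟨n - 1, by omega⟩
  have hfilter : univ.filter (fun i : Fin n => (i : ℕ) < n - 1) = univ.erase last := by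
    ext i; simp [last, Fin.ext_iff]; omega
  have hsum' : ((#(univ : Finset (Fin n)) : ℝ) - 2) * (π / 2) ≤ ∑ i, arctan (lam i) := by
    simpa [mul_div_assoc] using hsum
  simp only [hfilter, one_div]
  refine ⟨sum_inv_erase_le_neg_inv (mem_univ last) hneg hsum', ?_⟩
  calc ((n : ℝ) - 1) / lam ⟨0, by omega⟩
        = ∑ _i ∈ univ.erase last, (lam ⟨0, by omega⟩)⁻¹ := by
        rw [sum_const, card_erase_of_mem (mem_univ _), nsmul_eq_mul, div_eq_mul_inv]
        simp [Nat.cast_sub (by omega : 1 ≤ n)]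
    _ ≤ ∑ i ∈ univ.erase last, (lam i)⁻¹ := by
        refine sum_le_sum fun i hi => inv_anti₀ ?_ (hsort _ _ (Fin.mk_le_mk.mpr i.val.zero_le))
        exact pos_of_sum_arctan_ge (mem_univ last) hneg hsum' i hi
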